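/- arXiv:2202.06648 — 15 statements merged into one kernel-verified Lean document; each statement's English description precedes it below -/
import Mathlib

section
/- If β ≤ μ(1 + d₀/α), then the only fixed point of W₀ in the nonnegative quadrant ℝ₊² is (0,0); i.e., the system x = βy − (α/(1+x) + d₀ − 1)x, y = αx/(1+x) + (1−μ)y with x ≥ 0, y ≥ 0 has only the solution (0,0). -/
theorem stmt_0 (α β μ d₀ : ℝ)
    (hα : 0 < α) (hβ : 0 < β) (hμ0 : 0 < μ) (hμ1 : μ ≤ 1)
    (hd : 0 < d₀) (had : α + d₀ ≤ 1)
    (hle : β ≤ μ * (1 + d₀ / α)) :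
    ∀ x y : ℝ, 0 ≤ x → 0 ≤ y →
      x = β * y - (α / (1 + x) + d₀ - 1) * x →
      y = α * x / (1 + x) + (1 - μ) * y →
      x = 0 ∧ y = 0 := by
  intro x y hx hy h1 h2
  have h1x : (0:ℝ) < 1 + x := by linarith
  have hle' : β * α ≤ μ * α + μ * d₀ := by
    have h := mul_le_mul_of_nonneg_right hle hα.le
    have heq : μ * (1 + d₀ / α) * α = μ * α + μ * d₀ := by field_simp
    linarith [heq ▸ h]
  have E2 : μ * y * (1 + x) = α * x := by
    have h : μ * y = α * x / (1 + x) := by linarith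
    rw [eq_div_iff h1x.ne'] at h
    linarith
  have E1 : β * y * (1 + x) = α * x + d₀ * x * (1 + x) := by
    have h := h1
    field_simp at h
    nlinarith [h]
  have hx0 : x = 0 := by
    by_contra hne
    have hxpos : 0 < x := lt_of_le_of_ne hx (Ne.symm hne)
    have key : β * (α * x) = μ * (α * x + d₀ * x * (1 + x)) := by
      linear_combination μ * E1 - β * E2
    nlinarith [key, mul_le_mul_of_nonneg_right hle' hx,
      mul_pos (mul_pos hμ0 hd) (mul_pos hxpos hxpos)]
  subst hx0
  simp at h2
  constructor
  · rfl
  · nlinarith [h2]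
end

section
/- If β > μ(1 + d₀/α), then the operator W₀ has exactly two fixed points in ℝ₊²: (0,0) and (x*, y*) where x* = α(β−μ)/(μd₀) − 1 and y* = (α(β−μ) − μd₀)/(μ(β−μ)), and both coordinates x*, y* are nonnegative. -/
set_option maxHeartbeats 1000000


theorem stmt_1 (α β μ d₀ : ℝ)
    (hα : 0 < α) (hβ : 0 < β) (hμ0 : 0 < μ) (hμ1 : μ ≤ 1)
    (hd : 0 < d₀) (had : α + d₀ ≤ 1)
    (hgt : β > μ * (1 + d₀ / α)) :
    (0:ℝ) ≤ α * (β - μ) / (μ * d₀) - 1 ∧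
    (0:ℝ) ≤ (α * (β - μ) - μ * d₀) / (μ * (β - μ)) ∧
    ∀ x y : ℝ, 0 ≤ x → 0 ≤ y →
      ((x = β * y - (α / (1 + x) + d₀ - 1) * x ∧
        y = α * x / (1 + x) + (1 - μ) * y) ↔
       ((x = 0 ∧ y = 0) ∨
        (x = α * (β - μ) / (μ * d₀) - 1 ∧
         y = (α * (β - μ) - μ * d₀) / (μ * (β - μ))))) := by
  have hda : 0 < μ * (d₀ / α) := by positivity
  have hβμ : μ < β := by nlinarith [hgt]
  have hda' : μ * (d₀ / α) * α = μ * d₀ := by field_simp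
  have hkey : μ * d₀ < α * (β - μ) := by nlinarith [mul_lt_mul_of_pos_right hgt hα]
  have hμd : (0:ℝ) < μ * d₀ := by positivity
  have hβμ' : (0:ℝ) < β - μ := by linarith
  refine ⟨?_, ?_, ?_⟩
  · have : (1:ℝ) ≤ α * (β - μ) / (μ * d₀) := (one_le_div hμd).mpr hkey.le
    linarith
  · apply div_nonneg (by linarith) (by positivity)
  · intro x y hx hy
    have hx1 : (0:ℝ) < 1 + x := by linarith
    constructor
    · rintro ⟨e1, e2⟩
      have E2 : μ * y * (1 + x) = α * x := by
        field_simp at e2; nlinarith [e2]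
      have E1 : β * y * (1 + x) = α * x + d₀ * x * (1 + x) := by
        field_simp at e1; nlinarith [e1]
      have hy2 : (β - μ) * y = d₀ * x := by
        have h : ((β - μ) * y) * (1 + x) = (d₀ * x) * (1 + x) := by nlinarith [E1, E2]
        exact mul_right_cancel₀ hx1.ne' h
      rcases eq_or_lt_of_le hx with hx0 | hx0
      · left
        have : y = 0 := by
          have : (β - μ) * y = 0 := by rw [hy2, ← hx0]; ring
          exact (mul_eq_zero.mp this).resolve_left hβμ'.ne'
        exact ⟨hx0.symm, this⟩
      · right
        have hxx : μ * d₀ * (1 + x) = α * (β - μ) := by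
          have h : (μ * d₀ * (1 + x)) * x = (α * (β - μ)) * x := by nlinarith [E2, hy2]
          exact mul_right_cancel₀ hx0.ne' h
        have hxv : x = α * (β - μ) / (μ * d₀) - 1 := by
          field_simp
          linarith [hxx]
        refine ⟨hxv, ?_⟩
        have : y = d₀ * x / (β - μ) := by
          field_simp
          linarith [hy2]
        rw [this, hxv]
        field_simp
    · rintro (⟨hx0, hy0⟩ | ⟨hx0, hy0⟩)
      · subst hx0; subst hy0; constructor <;> ring
      · subst hx0; subst hy0
        have h1x : 1 + (α * (β - μ) / (μ * d₀) - 1) = α * (β - μ) / (μ * d₀) := by ring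
        constructor
        · rw [h1x]
          field_simp
          ring
        · rw [h1x]
          field_simp
          ring
end

section
/- If β < μ(1 + d₀/α), then both eigenvalues of the Jacobian matrix J(0,0) = [[1 − d₀ − α, β], [α, 1 − μ]] have absolute value strictly less than 1; i.e., the fixed point (0,0) of W₀ is attracting. -/
lemma jury_aux (T D a b : ℝ) (h1 : a ^ 2 - b ^ 2 - T * a + D = 0)
    (h2 : 2 * a * b - T * b = 0)
    (hp1 : 1 - T + D > 0) (hpm1 : 1 + T + D > 0)
    (hD1 : D < 1) (hDm1 : -1 < D) : a ^ 2 + b ^ 2 < 1 := by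
  rcases eq_or_ne b 0 with hb0 | hb0
  · rw [hb0]
    rw [hb0] at h1
    have hroot : a ^ 2 - T * a + D = 0 := by nlinarith
    by_contra hcon
    push_neg at hcon
    have ha2 : 1 ≤ a ^ 2 := by nlinarith
    have hD' : D = a * (T - a) := by nlinarith
    rcases le_or_gt 1 a with hge | hlt1
    · have g1 : (1 - a) * (1 - (T - a)) > 0 := by nlinarith
      have c1 : 1 - a < 0 ∧ 1 - (T - a) < 0 := by
        rcases lt_trichotomy (1 - a) 0 with h | h | h
        · exact ⟨h, by nlinarith⟩
        · nlinarith
        · nlinarith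
      nlinarith [c1.1, c1.2]
    · have hle : a ≤ -1 := by nlinarith
      have g1 : (1 + a) * (1 + (T - a)) > 0 := by nlinarith
      have c1 : 1 + a < 0 ∧ 1 + (T - a) < 0 := by
        rcases lt_trichotomy (1 + a) 0 with h | h | h
        · exact ⟨h, by nlinarith⟩
        · nlinarith
        · nlinarith
      nlinarith [c1.1, c1.2]
  · have hT2 : T = 2 * a := by
      have hz : b * (2 * a - T) = 0 := by linarith [h2]; 
      rcases mul_eq_zero.1 hz with h | h
      · exact absurd h hb0
      · linarith
    have : a ^ 2 + b ^ 2 = D := by rw [hT2] at h1; nlinarith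
    linarith



theorem stmt_3 (α β μ d₀ : ℝ)
    (hα : 0 < α) (hβ : 0 < β) (hμ0 : 0 < μ) (hμ1 : μ ≤ 1)
    (hd : 0 < d₀) (had : α + d₀ ≤ 1)
    (hlt : β < μ * (1 + d₀ / α)) :
    ∀ lam : ℂ,
      (Matrix.charpoly
        (!![((1 - d₀ - α : ℝ) : ℂ), ((β : ℝ) : ℂ);
            ((α : ℝ) : ℂ), ((1 - μ : ℝ) : ℂ)])).eval lam = 0 →
      ‖lam‖ < 1 := by
  intro lam h
  rw [Matrix.charpoly, Matrix.det_fin_two] at h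
  simp [Matrix.charmatrix_apply_eq, Matrix.charmatrix_apply_ne] at h
  set T : ℝ := (1 - d₀ - α) + (1 - μ) with hT
  set D : ℝ := (1 - d₀ - α) * (1 - μ) - β * α with hD
  have h' : lam ^ 2 - (T : ℂ) * lam + (D : ℂ) = 0 := by
    rw [hT, hD]
    push_cast
    linear_combination h
  set a : ℝ := lam.re with ha
  set b : ℝ := lam.im with hb
  have h1 : a ^ 2 - b ^ 2 - T * a + D = 0 := by
    have := congrArg Complex.re h'
    simpa [Complex.ext_iff, pow_two, Complex.mul_re, Complex.mul_im] using this
  have h2 : 2 * a * b - T * b = 0 := by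
    have := congrArg Complex.im h'
    simp [Complex.ext_iff, pow_two, Complex.mul_re, Complex.mul_im] at this
    linarith
  -- key scalar inequalities
  have hab : α * β < μ * (α + d₀) := by
    have h3 : β * α < μ * (1 + d₀ / α) * α := by
      exact mul_lt_mul_of_pos_right hlt hα
    have : μ * (1 + d₀ / α) * α = μ * (α + d₀) := by
      field_simp
    nlinarith
  have hp1 : 1 - T + D > 0 := by
    rw [hT, hD]; nlinarith
  have hpm1 : 1 + T + D > 0 := by
    rw [hT, hD]; nlinarith [mul_nonneg (sub_nonneg.2 had) (sub_nonneg.2 hμ1)]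
  have hD1 : D < 1 := by
    rw [hD]
    nlinarith [mul_nonneg (sub_nonneg.2 had) (sub_nonneg.2 hμ1), mul_pos hβ hα]
  have hDm1 : -1 < D := by
    rw [hD]
    nlinarith [mul_nonneg (sub_nonneg.2 had) (sub_nonneg.2 hμ1), mul_le_one₀ had hμ0.le hμ1]
  -- show |lam|^2 < 1
  have key : a ^ 2 + b ^ 2 < 1 := jury_aux T D a b h1 h2 hp1 hpm1 hD1 hDm1
  have habs : ‖lam‖ ^ 2 < 1 := by
    rw [Complex.sq_norm, Complex.normSq_apply]
    nlinarith [key]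
  nlinarith [norm_nonneg lam, habs]
end

section
/- If β > μ(1 + d₀/α) + (1/α)(4 − 2(μ + d₀ + α)), then both eigenvalues of the matrix [[1 − d₀ − α, β], [α, 1 − μ]] have absolute value strictly greater than 1 (the fixed point (0,0) is repelling). -/
theorem stmt_4 (α β μ d₀ : ℝ)
    (hα : 0 < α) (hβ : 0 < β) (hμ0 : 0 < μ) (hμ1 : μ ≤ 1)
    (hd : 0 < d₀) (had : α + d₀ ≤ 1)
    (hgt : β > μ * (1 + d₀ / α) + (1 / α) * (4 - 2 * (μ + d₀ + α))) :
    ∀ lam : ℂ,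
      (Matrix.charpoly
        (!![((1 - d₀ - α : ℝ) : ℂ), ((β : ℝ) : ℂ);
            ((α : ℝ) : ℂ), ((1 - μ : ℝ) : ℂ)])).eval lam = 0 →
      ‖lam‖ > 1 := by
  intro lam hlam
  -- trace and determinant
  set T : ℝ := 2 - μ - d₀ - α with hT_def
  set D : ℝ := (1 - d₀ - α) * (1 - μ) - β * α with hD_def
  have hT0 : 0 ≤ T := by simp only [hT_def]; linarith
  -- from hgt, α * β > μ*(α+d₀) + 4 - 2*(μ+d₀+α)
  have hgt' : β * α > μ * (α + d₀) + 4 - 2 * (μ + d₀ + α) := by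
    have h1 : (μ * (1 + d₀ / α) + (1 / α) * (4 - 2 * (μ + d₀ + α))) * α
        = μ * (α + d₀) + 4 - 2 * (μ + d₀ + α) := by
      field_simp; ring
    nlinarith [mul_lt_mul_of_pos_right hgt hα]
  have hD : D < -(1 + T) := by simp only [hD_def, hT_def]; nlinarith
  -- discriminant
  have hdisc : (T + 2) ^ 2 < T ^ 2 - 4 * D := by nlinarith
  set s : ℝ := Real.sqrt (T ^ 2 - 4 * D) with hs_def
  have hs2 : s ^ 2 = T ^ 2 - 4 * D := Real.sq_sqrt (by nlinarith)
  have hs : T + 2 < s := by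
    have : Real.sqrt ((T + 2) ^ 2) < s := by
      apply Real.sqrt_lt_sqrt (by positivity) hdisc
    rwa [Real.sqrt_sq (by linarith)] at this
  set r₁ : ℝ := (T + s) / 2 with hr₁
  set r₂ : ℝ := (T - s) / 2 with hr₂
  have hr₁1 : 1 < r₁ := by simp only [hr₁]; linarith
  have hr₂1 : r₂ < -1 := by simp only [hr₂]; linarith
  -- evaluate charpoly
  have hev : (lam - ((1 - d₀ - α : ℝ) : ℂ)) * (lam - ((1 - μ : ℝ) : ℂ))
      - ((β : ℝ) : ℂ) * ((α : ℝ) : ℂ) = 0 := by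
    rw [← hlam]
    simp [Matrix.charpoly, Matrix.det_fin_two, Matrix.charmatrix_apply]
  have hfact : (lam - (r₁ : ℂ)) * (lam - (r₂ : ℂ)) = 0 := by
    rw [← hev]
    have h1 : (r₁ : ℂ) + (r₂ : ℂ) = ((1 - d₀ - α : ℝ) : ℂ) + ((1 - μ : ℝ) : ℂ) := by
      push_cast
      simp only [hr₁, hr₂, hT_def]
      push_cast
      ring
    have h2 : (r₁ : ℂ) * (r₂ : ℂ) = ((1 - d₀ - α : ℝ) : ℂ) * ((1 - μ : ℝ) : ℂ)
        - ((β : ℝ) : ℂ) * ((α : ℝ) : ℂ) := by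
      have : r₁ * r₂ = D := by
        simp only [hr₁, hr₂]
        nlinarith [hs2]
      rw [show ((r₁ : ℂ) * r₂) = ((r₁ * r₂ : ℝ) : ℂ) by push_cast; ring, this]
      simp only [hD_def]
      push_cast
      ring
    linear_combination (-lam) * h1 + h2
  rcases mul_eq_zero.mp hfact with h | h
  · have : lam = (r₁ : ℂ) := by linear_combination h
    rw [this, Complex.norm_real, Real.norm_eq_abs]
    rw [abs_of_pos (by linarith)]
    exact hr₁1
  · have : lam = (r₂ : ℂ) := by linear_combination h
    rw [this, Complex.norm_real, Real.norm_eq_abs]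
    rw [abs_of_neg (by linarith)]
    linarith
end

section
/- If μ(1 + d₀/α) < β < μ(1 + d₀/α) + (1/α)(4 − 2(μ + d₀ + α)), then the matrix [[1 − d₀ − α, β], [α, 1 − μ]] has one eigenvalue of absolute value greater than 1 and one of absolute value less than 1 (the origin is a saddle point). -/
open Polynomial

lemma quad_factor_aux (a b c d l1 l2 : ℂ) (h1 : l1 + l2 = a + d)
    (h2 : l1 * l2 = a * d - b * c) :
    (X - C a) * (X - C d) - C b * C c = (X - C l1) * (X - C l2) := by
  have H1 : (C a : ℂ[X]) + C d = C l1 + C l2 := by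
    simp only [← map_add]; exact congrArg C h1.symm
  have H2 : (C a : ℂ[X]) * C d - C b * C c = C l1 * C l2 := by
    simp only [← map_mul, ← map_sub]; exact congrArg C h2.symm
  linear_combination (-(X : ℂ[X])) * H1 + H2

set_option maxHeartbeats 800000 in
theorem stmt_5 (α β μ d₀ : ℝ)
    (hα : 0 < α) (hβ : 0 < β) (hμ0 : 0 < μ) (hμ1 : μ ≤ 1)
    (hd : 0 < d₀) (had : α + d₀ ≤ 1)
    (h1 : μ * (1 + d₀ / α) < β)
    (h2 : β < μ * (1 + d₀ / α) + (1 / α) * (4 - 2 * (μ + d₀ + α))) :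
    ∃ lam₁ lam₂ : ℂ,
      (Matrix.charpoly
        (!![((1 - d₀ - α : ℝ) : ℂ), ((β : ℝ) : ℂ);
            ((α : ℝ) : ℂ), ((1 - μ : ℝ) : ℂ)])) =
        (Polynomial.X - Polynomial.C lam₁) * (Polynomial.X - Polynomial.C lam₂) ∧
      ‖lam₁‖ > 1 ∧ ‖lam₂‖ < 1 := by
  set T : ℝ := (1 - d₀ - α) + (1 - μ) with hT
  set D : ℝ := (1 - d₀ - α) * (1 - μ) - β * α with hD
  have hdiv : α * (d₀ / α) = d₀ := mul_div_cancel₀ _ hα.ne'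
  -- clear divisions from h1, h2
  have h1' : α * μ + d₀ * μ < α * β := by
    have := mul_lt_mul_of_pos_left h1 hα
    nlinarith [this]
  have h2' : α * β < α * μ + d₀ * μ + 4 - 2 * (μ + d₀ + α) := by
    have := mul_lt_mul_of_pos_left h2 hα
    have hinv : α * (1 / α) = 1 := mul_one_div_cancel hα.ne'
    nlinarith [this]
  have hΔ : 0 < T ^ 2 - 4 * D := by nlinarith [sq_nonneg ((1 - d₀ - α) - (1 - μ)), mul_pos hα hβ]
  set s : ℝ := Real.sqrt (T ^ 2 - 4 * D) with hs
  have hs0 : 0 ≤ s := Real.sqrt_nonneg _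
  have hs2 : s ^ 2 = T ^ 2 - 4 * D := Real.sq_sqrt hΔ.le
  set l1 : ℝ := (T + s) / 2 with hl1
  set l2 : ℝ := (T - s) / 2 with hl2
  have hsum : l1 + l2 = T := by rw [hl1, hl2]; ring
  have hprod : l1 * l2 = D := by rw [hl1, hl2]; linear_combination hs2 * (-1/4 : ℝ)
  -- f(1) < 0 : 1 - T + D < 0
  have hf1 : 1 - T + D < 0 := by rw [hT, hD]; nlinarith
  -- f(-1) > 0 : 1 + T + D > 0
  have hfm1 : 0 < 1 + T + D := by rw [hT, hD]; nlinarith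
  -- s > 2 - T
  have hsgt : 2 - T < s := by
    rcases le_or_gt (2 - T) 0 with h | h
    · linarith
    · nlinarith [hs2, hs0, hf1]
  have hl1gt : 1 < l1 := by rw [hl1]; linarith
  have hT2 : 0 < T + 2 := by rw [hT]; linarith
  have hslt : s < T + 2 := by
    rw [hs, show T + 2 = Real.sqrt ((T+2)^2) from (Real.sqrt_sq hT2.le).symm]
    exact Real.sqrt_lt_sqrt hΔ.le (by nlinarith [hfm1])
  have hl2gt : -1 < l2 := by rw [hl2]; linarith
  have hl2lt : l2 < 1 := by
    rw [hl2]
    have : T - 2 < s := by rw [hT]; linarith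
    linarith
  refine ⟨(l1 : ℂ), (l2 : ℂ), ?_, ?_, ?_⟩
  · rw [Matrix.charpoly, Matrix.det_fin_two]
    simp only [Matrix.charmatrix_apply_eq, Matrix.charmatrix_apply_ne _ _ _ (by decide : (0:Fin 2) ≠ 1),
      Matrix.charmatrix_apply_ne _ _ _ (by decide : (1:Fin 2) ≠ 0), Matrix.cons_val', Matrix.cons_val_zero,
      Matrix.cons_val_one, Matrix.head_cons, Matrix.empty_val', Matrix.cons_val_fin_one, Matrix.head_fin_const, neg_mul_neg]
    have e1 : ((l1 : ℂ)) + (l2 : ℂ) = ((1 - d₀ - α : ℝ) : ℂ) + ((1 - μ : ℝ) : ℂ) := by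
      norm_cast
    have e2 : ((l1 : ℂ)) * (l2 : ℂ) =
        ((1 - d₀ - α : ℝ) : ℂ) * ((1 - μ : ℝ) : ℂ) - ((β : ℝ) : ℂ) * ((α : ℝ) : ℂ) := by
      have : l1 * l2 = (1 - d₀ - α) * (1 - μ) - β * α := by rw [hprod, hD]
      exact_mod_cast congrArg (Complex.ofReal) this
    exact quad_factor_aux _ _ _ _ _ _ e1 e2
  · rw [Complex.norm_real, Real.norm_eq_abs, abs_of_pos (by linarith)]
    exact hl1gt
  · rw [Complex.norm_real, Real.norm_eq_abs]
    exact abs_lt.mpr ⟨hl2gt, hl2lt⟩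
end

section
/- Suppose β > μ(1 + d₀/α) and let x* = α(β−μ)/(μd₀) − 1. Then the quadratic Λ² − (μ + d₀ + α/(1+x*)²)Λ + (μ(d₀ + α/(1+x*)²) − αβ/(1+x*)²) = 0 has both roots in the open interval (0,2); equivalently, the fixed point (x*, y*) of W₀ is attracting. -/
lemma quad_root_interval (b c Λ : ℝ) (hb0 : 0 < b) (hb4 : b < 4) (hc : 0 < c)
    (h2 : 0 < 4 - 2 * b + c) (hq : Λ ^ 2 - b * Λ + c = 0) : 0 < Λ ∧ Λ < 2 := by
  constructor
  · by_contra h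
    push_neg at h
    nlinarith [sq_nonneg Λ, mul_nonneg hb0.le (neg_nonneg.mpr h)]
  · by_contra h
    push_neg at h
    nlinarith [mul_nonneg (by linarith : (0:ℝ) ≤ Λ - 2) (by linarith : (0:ℝ) ≤ Λ + 2 - b)]

theorem stmt_6 (α β μ d₀ : ℝ)
    (hα : 0 < α) (hβ : 0 < β) (hμ0 : 0 < μ) (hμ1 : μ ≤ 1)
    (hd : 0 < d₀) (had : α + d₀ ≤ 1)
    (hgt : β > μ * (1 + d₀ / α)) :
    let xs := α * (β - μ) / (μ * d₀) - 1
    ∀ Λ : ℝ,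
      Λ ^ 2 - (μ + d₀ + α / (1 + xs) ^ 2) * Λ +
        (μ * (d₀ + α / (1 + xs) ^ 2) - α * β / (1 + xs) ^ 2) = 0 →
      0 < Λ ∧ Λ < 2 := by
  intro xs Λ hΛ
  have hμd : 0 < μ * d₀ := mul_pos hμ0 hd
  have hkey : α * (β - μ) > μ * d₀ := by
    have h1 : μ * d₀ / α < β - μ := by
      have : μ * d₀ / α = μ * (d₀ / α) := by ring
      nlinarith [mul_lt_mul_of_pos_left hgt hα, this]
    have := (div_lt_iff₀ hα).mp h1
    linarith
  set t : ℝ := 1 + xs with ht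
  have htval : t = α * (β - μ) / (μ * d₀) := by simp [ht, xs]
  have ht1 : 1 < t := by
    rw [htval, lt_div_iff₀ hμd]; linarith
  have ht0 : 0 < t := by linarith
  have htmul : t * (μ * d₀) = α * (β - μ) := by rw [htval]; field_simp
  set A : ℝ := α / t ^ 2 with hA
  have hA0 : 0 < A := div_pos hα (by positivity)
  have ht2 : 1 < t ^ 2 := by nlinarith
  have hAα : A < α := by
    rw [hA, div_lt_iff₀ (by positivity)]
    nlinarith
  have hAc : A * (β - μ) * t = μ * d₀ := by
    rw [hA]; field_simp; nlinarith [htmul]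
  have hc : 0 < μ * d₀ - A * (β - μ) := by
    have h1 : A * (β - μ) = μ * d₀ / t := by
      field_simp; linarith [hAc]
    have h2 : μ * d₀ / t < μ * d₀ := by
      rw [div_lt_iff₀ ht0]; nlinarith
    linarith
  have hAβ : A * β = α * β / t ^ 2 := by rw [hA]; ring
  have hquad : Λ ^ 2 - (μ + d₀ + A) * Λ + (μ * d₀ - A * (β - μ)) = 0 := by
    linear_combination hΛ - hAβ
  have hb4 : μ + d₀ + A < 2 := by nlinarith
  exact quad_root_interval _ _ _ (by positivity) (by linarith) hc (by linarith) hquad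
end

section
/- Along any orbit of W₀ in ℝ₊² with y⁽ⁿ⁾ < α/μ for all n, if x⁽ⁿ⁻¹⁾ < αβ/(μd₀) then x⁽ⁿ⁾ < αβ/(μd₀); i.e., the region {(x,y) : 0 ≤ x < αβ/(μd₀), 0 ≤ y < α/μ} is forward invariant under W₀. -/
theorem stmt_9 (α β μ d₀ : ℝ)
    (hα : 0 < α) (hβ : 0 < β) (hμ0 : 0 < μ) (hμ1 : μ ≤ 1)
    (hd : 0 < d₀) (had : α + d₀ ≤ 1) :
    ∀ x y : ℝ, 0 ≤ x → 0 ≤ y →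
      x < α * β / (μ * d₀) → y < α / μ →
      (0 ≤ β * y - (α / (1 + x) + d₀ - 1) * x ∧
       β * y - (α / (1 + x) + d₀ - 1) * x < α * β / (μ * d₀)) ∧
      (0 ≤ α * x / (1 + x) + (1 - μ) * y ∧
       α * x / (1 + x) + (1 - μ) * y < α / μ) := by
  intro x y hx hy hxb hyb
  have hx1 : (0:ℝ) < 1 + x := by linarith
  have hμd : (0:ℝ) < μ * d₀ := mul_pos hμ0 hd
  have ht0 : 0 ≤ α / (1 + x) := le_of_lt (div_pos hα hx1)
  have htle : α / (1 + x) ≤ α := by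
    rw [div_le_iff₀ hx1]; nlinarith
  have hc : α * β / (μ * d₀) * (μ * d₀) = α * β := div_mul_cancel₀ _ (ne_of_gt hμd)
  have hcy : α / μ * μ = α := div_mul_cancel₀ _ (ne_of_gt hμ0)
  have hd1 : d₀ ≤ 1 := by linarith
  refine ⟨⟨?_, ?_⟩, ?_, ?_⟩
  · nlinarith [mul_nonneg hy hβ.le, mul_nonneg hx (sub_nonneg.2 htle)]
  · -- β*y < β*(α/μ), (1-d₀-t)*x ≤ (1-d₀)*x, x < c
    have h1 : β * y < β * (α / μ) := by
      exact mul_lt_mul_of_pos_left hyb hβ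
    have h2 : (1 - d₀ - α / (1 + x)) * x ≤ (1 - d₀) * x := by
      nlinarith [mul_nonneg ht0 hx]
    have h3 : (1 - d₀) * x ≤ (1 - d₀) * (α * β / (μ * d₀)) :=
      mul_le_mul_of_nonneg_left hxb.le (by linarith)
    have h4 : β * (α / μ) = d₀ * (α * β / (μ * d₀)) := by
      field_simp
    nlinarith
  · have : 0 ≤ α * x / (1 + x) := by positivity
    nlinarith [mul_nonneg (sub_nonneg.2 hμ1) hy]
  · have h5 : α * x / (1 + x) < α := by
      rw [div_lt_iff₀ hx1]; nlinarith
    have h6 : (1 - μ) * y ≤ (1 - μ) * (α / μ) :=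
      mul_le_mul_of_nonneg_left hyb.le (by linarith)
    have h7 : α + (1 - μ) * (α / μ) = α / μ := by
      field_simp; ring
    nlinarith
end

section
/- Every orbit (x⁽ⁿ⁾, y⁽ⁿ⁾) of W₀ starting in ℝ₊² is bounded: there is a constant M (depending on the initial point and parameters) with x⁽ⁿ⁾ ≤ M and y⁽ⁿ⁾ ≤ M for all n. -/
theorem stmt_10 (α β μ d₀ : ℝ)
    (hα : 0 < α) (hβ : 0 < β) (hμ0 : 0 < μ) (hμ1 : μ ≤ 1)
    (hd : 0 < d₀) (had : α + d₀ ≤ 1)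
    (W₀ : ℝ × ℝ → ℝ × ℝ)
    (hW : ∀ p : ℝ × ℝ, W₀ p =
      (β * p.2 - (α / (1 + p.1) + d₀ - 1) * p.1,
       α * p.1 / (1 + p.1) + (1 - μ) * p.2)) :
    ∀ p : ℝ × ℝ, 0 ≤ p.1 → 0 ≤ p.2 →
      ∃ M : ℝ, ∀ n : ℕ, (W₀^[n] p).1 ≤ M ∧ (W₀^[n] p).2 ≤ M := by
  intro p hx0 hy0
  set Y := max p.2 (α / μ) with hYdef
  set X := max p.1 (β * Y / d₀) with hXdef
  have hYα : α / μ ≤ Y := le_max_right _ _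
  have hYα' : α ≤ μ * Y := by
    rw [div_le_iff₀ hμ0] at hYα; linarith
  have hXβ : β * Y / d₀ ≤ X := le_max_right _ _
  have hXβ' : β * Y ≤ d₀ * X := by
    rw [div_le_iff₀ hd] at hXβ; linarith
  have key : ∀ n, 0 ≤ (W₀^[n] p).1 ∧ (W₀^[n] p).1 ≤ X ∧
      0 ≤ (W₀^[n] p).2 ∧ (W₀^[n] p).2 ≤ Y := by
    intro n
    induction n with
    | zero => exact ⟨hx0, le_max_left _ _, hy0, le_max_left _ _⟩
    | succ n ih =>
      obtain ⟨hx, hxX, hy, hyY⟩ := ih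
      rw [Function.iterate_succ_apply', hW]
      set x := (W₀^[n] p).1 with hxdef
      set y := (W₀^[n] p).2 with hydef
      have h1x : (0:ℝ) < 1 + x := by linarith
      have hfrac_nn : 0 ≤ α / (1 + x) := div_nonneg hα.le h1x.le
      have hfrac_le : α / (1 + x) ≤ α := by
        rw [div_le_iff₀ h1x]; nlinarith
      have hXnn : 0 ≤ X := le_trans hx hxX
      have hYnn : 0 ≤ Y := le_trans hy hyY
      have hxfrac_le : α * x / (1 + x) ≤ α := by
        rw [div_le_iff₀ h1x]; nlinarith
      have hxfrac_nn : 0 ≤ α * x / (1 + x) :=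
        div_nonneg (mul_nonneg hα.le hx) h1x.le
      refine ⟨?_, ?_, ?_, ?_⟩
      · show (0:ℝ) ≤ β * y - (α / (1 + x) + d₀ - 1) * x
        have h2 : 0 ≤ -(α / (1 + x) + d₀ - 1) * x := by
          apply mul_nonneg _ hx
          linarith
        nlinarith [mul_nonneg hβ.le hy]
      · show β * y - (α / (1 + x) + d₀ - 1) * x ≤ X
        have h1 : β * y ≤ β * Y := by nlinarith
        have h2 : -(α / (1 + x) + d₀ - 1) * x ≤ (1 - d₀) * x := by
          nlinarith
        nlinarith
      · show (0:ℝ) ≤ α * x / (1 + x) + (1 - μ) * y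
        have := mul_nonneg (by linarith : (0:ℝ) ≤ 1 - μ) hy
        linarith
      · show α * x / (1 + x) + (1 - μ) * y ≤ Y
        have h2 : (1 - μ) * y ≤ (1 - μ) * Y := by nlinarith
        linarith
  exact ⟨max X Y, fun n => ⟨le_trans (key n).2.1 (le_max_left _ _),
    le_trans (key n).2.2.2 (le_max_right _ _)⟩⟩
end

section
/- If β < μ(1 + d₀/α), then for every initial point (x⁽⁰⁾, y⁽⁰⁾) ∈ ℝ₊², the orbit under W₀ satisfies lim_{n→∞} x⁽ⁿ⁾ = 0 and lim_{n→∞} y⁽ⁿ⁾ = 0. -/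
theorem stmt_12 (α β μ d₀ : ℝ)
    (hα : 0 < α) (hβ : 0 < β) (hμ0 : 0 < μ) (hμ1 : μ ≤ 1)
    (hd : 0 < d₀) (had : α + d₀ ≤ 1)
    (hlt : β < μ * (1 + d₀ / α))
    (W₀ : ℝ × ℝ → ℝ × ℝ)
    (hW : ∀ p : ℝ × ℝ, W₀ p =
      (β * p.2 - (α / (1 + p.1) + d₀ - 1) * p.1,
       α * p.1 / (1 + p.1) + (1 - μ) * p.2)) :
    ∀ p : ℝ × ℝ, 0 ≤ p.1 → 0 ≤ p.2 →
      Filter.Tendsto (fun n => (W₀^[n] p).1) Filter.atTop (nhds 0) ∧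
      Filter.Tendsto (fun n => (W₀^[n] p).2) Filter.atTop (nhds 0) := by
  intro p hx hy
  -- choose c with 1 < c, β/μ < c, c < 1 + d₀/α
  obtain ⟨c, hc1, hcβ, hcd⟩ : ∃ c : ℝ, 1 < c ∧ β / μ < c ∧ c < 1 + d₀ / α := by
    have hβμ : β / μ < 1 + d₀ / α := by
      rw [div_lt_iff₀ hμ0]; linarith
    have h1 : (1 : ℝ) < 1 + d₀ / α := by
      have : 0 < d₀ / α := div_pos hd hα
      linarith
    refine ⟨(max 1 (β / μ) + (1 + d₀ / α)) / 2, ?_, ?_, ?_⟩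
    · have := le_max_left 1 (β / μ); linarith
    · have := le_max_right 1 (β / μ); linarith
    · have := max_lt h1 hβμ; linarith
  have hc0 : 0 < c := by linarith
  -- choose contraction factor θ
  obtain ⟨θ, hθ0, hθ1, hθa, hθb⟩ :
      ∃ θ : ℝ, 0 ≤ θ ∧ θ < 1 ∧ 1 - d₀ + (c - 1) * α ≤ θ ∧ 1 - μ + β / c ≤ θ := by
    refine ⟨max (1 - d₀ + (c - 1) * α) (1 - μ + β / c), ?_, ?_, le_max_left _ _,
      le_max_right _ _⟩
    · have : 0 < β / c := div_pos hβ hc0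
      exact le_trans (by linarith) (le_max_right _ _)
    · apply max_lt
      · have hca : (c - 1) * α < d₀ := (lt_div_iff₀ hα).1 (by linarith)
        linarith
      · have : β / c < μ := by
          rw [div_lt_iff₀ hc0]
          calc β = β / μ * μ := by field_simp
            _ < c * μ := mul_lt_mul_of_pos_right hcβ hμ0
            _ = μ * c := mul_comm _ _
        linarith
  -- key one-step estimate
  have key : ∀ q : ℝ × ℝ, 0 ≤ q.1 → 0 ≤ q.2 →
      0 ≤ (W₀ q).1 ∧ 0 ≤ (W₀ q).2 ∧
        (W₀ q).1 + c * (W₀ q).2 ≤ θ * (q.1 + c * q.2) := by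
    intro q hqx hqy
    rw [hW q]
    set x := q.1
    set y := q.2
    have h1x : (0:ℝ) < 1 + x := by linarith
    have h1x1 : (1:ℝ) ≤ 1 + x := by linarith
    have hfa : α / (1 + x) ≤ α := div_le_self hα.le h1x1
    have hfa0 : 0 ≤ α / (1 + x) := div_nonneg hα.le h1x.le
    have ht0 : 0 ≤ α * x / (1 + x) := div_nonneg (mul_nonneg hα.le hqx) h1x.le
    have htx : α * x / (1 + x) ≤ α * x := div_le_self (mul_nonneg hα.le hqx) h1x1
    have heq : α / (1 + x) * x = α * x / (1 + x) := by ring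
    refine ⟨?_, ?_, ?_⟩
    · dsimp only
      have h2 : α / (1 + x) + d₀ - 1 ≤ 0 := by linarith
      nlinarith [mul_nonneg (neg_nonneg.2 h2) hqx, mul_nonneg hβ.le hqy]
    · dsimp only
      have : 0 ≤ (1 - μ) * y := mul_nonneg (by linarith) hqy
      linarith
    · dsimp only
      have hθbc : c * (1 - μ) + β ≤ θ * c := by
        have := mul_le_mul_of_nonneg_right hθb hc0.le
        have hbc : β / c * c = β := div_mul_cancel₀ β hc0.ne'
        nlinarith
      have ht : (c - 1) * (α * x / (1 + x)) ≤ (c - 1) * (α * x) :=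
        mul_le_mul_of_nonneg_left htx (by linarith)
      have hxb : (1 - d₀ + (c - 1) * α) * x ≤ θ * x :=
        mul_le_mul_of_nonneg_right hθa hqx
      have hyb : (c * (1 - μ) + β) * y ≤ (θ * c) * y :=
        mul_le_mul_of_nonneg_right hθbc hqy
      have hexp : β * y - (α / (1 + x) + d₀ - 1) * x + c * (α * x / (1 + x) + (1 - μ) * y)
          = (1 - d₀) * x + (c - 1) * (α * x / (1 + x)) + (c * (1 - μ) + β) * y := by
        rw [← heq]; ring
      rw [hexp]
      nlinarith
  -- iterate
  have bound : ∀ n : ℕ, 0 ≤ (W₀^[n] p).1 ∧ 0 ≤ (W₀^[n] p).2 ∧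
      (W₀^[n] p).1 + c * (W₀^[n] p).2 ≤ θ ^ n * (p.1 + c * p.2) := by
    intro n
    induction n with
    | zero => simpa using ⟨hx, hy⟩
    | succ n ih =>
      obtain ⟨h1, h2, h3⟩ := ih
      rw [Function.iterate_succ_apply']
      obtain ⟨k1, k2, k3⟩ := key _ h1 h2
      refine ⟨k1, k2, ?_⟩
      calc (W₀ (W₀^[n] p)).1 + c * (W₀ (W₀^[n] p)).2
          ≤ θ * ((W₀^[n] p).1 + c * (W₀^[n] p).2) := k3
        _ ≤ θ * (θ ^ n * (p.1 + c * p.2)) := mul_le_mul_of_nonneg_left h3 hθ0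
        _ = θ ^ (n + 1) * (p.1 + c * p.2) := by ring
  have hVtend : Filter.Tendsto (fun n => θ ^ n * (p.1 + c * p.2)) Filter.atTop (nhds 0) := by
    have := (tendsto_pow_atTop_nhds_zero_of_lt_one hθ0 hθ1).mul_const (p.1 + c * p.2)
    simpa using this
  constructor
  · apply squeeze_zero (fun n => (bound n).1) (fun n => ?_) hVtend
    have ⟨h1, h2, h3⟩ := bound n
    nlinarith [mul_nonneg hc0.le h2]
  · have hVtend' : Filter.Tendsto (fun n => θ ^ n * (p.1 + c * p.2) / c)
        Filter.atTop (nhds 0) := by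
      simpa using hVtend.div_const c
    apply squeeze_zero (fun n => (bound n).2.1) (fun n => ?_) hVtend'
    have ⟨h1, h2, h3⟩ := bound n
    rw [le_div_iff₀ hc0]
    nlinarith
end

section
/- The function T(x) = ((1−d₀−β)x² + (1−d₀−α)x + β) / ((μ−β−d₀)x² + (1−d₀)x + β−μ+1) maps the interval [0,1] into itself: for every x ∈ [0,1], the denominator is positive and 0 ≤ T(x) ≤ 1. -/
theorem stmt_14 (α β μ d₀ : ℝ)
    (hα : 0 < α) (hβ : 0 < β) (hμ0 : 0 < μ) (hμ1 : μ ≤ 1)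
    (hd : 0 < d₀) (had : α + d₀ ≤ 1) :
    ∀ x ∈ Set.Icc (0:ℝ) 1,
      0 < (μ - β - d₀) * x ^ 2 + (1 - d₀) * x + β - μ + 1 ∧
      0 ≤ ((1 - d₀ - β) * x ^ 2 + (1 - d₀ - α) * x + β) /
          ((μ - β - d₀) * x ^ 2 + (1 - d₀) * x + β - μ + 1) ∧
      ((1 - d₀ - β) * x ^ 2 + (1 - d₀ - α) * x + β) /
          ((μ - β - d₀) * x ^ 2 + (1 - d₀) * x + β - μ + 1) ≤ 1 := by
  rintro x ⟨hx0, hx1⟩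
  have hD : 0 < (μ - β - d₀) * x ^ 2 + (1 - d₀) * x + β - μ + 1 := by
    nlinarith [mul_nonneg hx0 hx0, mul_nonneg (sub_nonneg.2 hx1) hβ.le,
      mul_nonneg hx0 (sub_nonneg.2 hx1), mul_nonneg (mul_nonneg hx0 hx0) hd.le,
      mul_nonneg (sub_nonneg.2 hx1) (mul_nonneg (add_nonneg hx0 (le_of_lt one_pos)) hβ.le),
      mul_nonneg hx0 (by linarith : (0:ℝ) ≤ 1 - d₀)]
  have hN : 0 ≤ (1 - d₀ - β) * x ^ 2 + (1 - d₀ - α) * x + β := by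
    nlinarith [mul_nonneg (sub_nonneg.2 hx1) (mul_nonneg (add_nonneg hx0 (le_of_lt one_pos)) hβ.le),
      mul_nonneg (mul_nonneg hx0 hx0) (by linarith : (0:ℝ) ≤ 1 - d₀),
      mul_nonneg hx0 (by linarith : (0:ℝ) ≤ 1 - d₀ - α)]
  refine ⟨hD, div_nonneg hN hD.le, (div_le_one hD).2 ?_⟩
  nlinarith [mul_nonneg (sub_nonneg.2 hx1) (mul_nonneg (add_nonneg hx0 (le_of_lt one_pos)) (by linarith : (0:ℝ) ≤ 1 - μ)),
    mul_nonneg hx0 hα.le]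
end

section
/- The cubic equation (μ−β−d₀)x³ + βx² + (β−μ+d₀+α)x − β = 0 has exactly one root in the interval [0,1]; equivalently, T has a unique fixed point in [0,1]. -/
theorem stmt_15 (α β μ d₀ : ℝ)
    (hα : 0 < α) (hβ : 0 < β) (hμ0 : 0 < μ) (hμ1 : μ ≤ 1)
    (hd : 0 < d₀) (had : α + d₀ ≤ 1) :
    ∃! x : ℝ, x ∈ Set.Icc (0:ℝ) 1 ∧
      (μ - β - d₀) * x ^ 3 + β * x ^ 2 + (β - μ + d₀ + α) * x - β = 0 := by
  -- uniqueness helper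
  have uniq : ∀ a b : ℝ, a ∈ Set.Icc (0:ℝ) 1 → b ∈ Set.Icc (0:ℝ) 1 →
      (μ - β - d₀) * a ^ 3 + β * a ^ 2 + (β - μ + d₀ + α) * a - β = 0 →
      (μ - β - d₀) * b ^ 3 + β * b ^ 2 + (β - μ + d₀ + α) * b - β = 0 →
      a = b := by
    intro a b ha hb hfa hfb
    obtain ⟨ha0, ha1⟩ := ha
    obtain ⟨hb0, hb1⟩ := hb
    by_contra hne
    have ha0' : 0 < a := by
      rcases lt_or_eq_of_le ha0 with h | h
      · exact h
      · exfalso; rw [← h] at hfa; nlinarith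
    have hb0' : 0 < b := by
      rcases lt_or_eq_of_le hb0 with h | h
      · exact h
      · exfalso; rw [← h] at hfb; nlinarith
    have ha1' : a < 1 := by
      rcases lt_or_eq_of_le ha1 with h | h
      · exact h
      · exfalso; rw [h] at hfa; nlinarith
    have hb1' : b < 1 := by
      rcases lt_or_eq_of_le hb1 with h | h
      · exact h
      · exfalso; rw [h] at hfb; nlinarith
    have hab : a - b ≠ 0 := sub_ne_zero.mpr hne
    have key : (a - b) * ((μ - β - d₀) * (a^2 + a*b + b^2 - 1) + β * (a + b) + α) = 0 := by
      linear_combination hfa - hfb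
    have hG : (μ - β - d₀) * (a^2 + a*b + b^2 - 1) + β * (a + b) + α = 0 := by
      rcases mul_eq_zero.mp key with h | h
      · exact absurd h hab
      · exact h
    have hstar : (μ - β - d₀) * (a*b) * (a+b) + β * (1 + a*b) = 0 := by
      linear_combination a * hG - hfa
    have hfinal : α * (a*b) * (a+b) = β * ((a+b)^2 - (1 + a*b)^2) := by
      linear_combination (a*b*(a+b)) * hG - ((a+b)^2 - a*b - 1) * hstar
    have h1 : 0 < (1 - a) * (1 - b) * (a + b + 1 + a*b) := by
      apply mul_pos (mul_pos (by linarith) (by linarith))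
      nlinarith
    have h2 : 0 < α * (a*b) * (a+b) := by positivity
    nlinarith [mul_pos hβ h1, h2]
  -- existence via IVT
  have hcont : ContinuousOn (fun x : ℝ => (μ - β - d₀) * x ^ 3 + β * x ^ 2 + (β - μ + d₀ + α) * x - β) (Set.Icc 0 1) := by
    fun_prop
  have hIVT := intermediate_value_Icc (by norm_num : (0:ℝ) ≤ 1) hcont
  have h0mem : (0:ℝ) ∈ Set.Icc ((μ - β - d₀) * 0 ^ 3 + β * 0 ^ 2 + (β - μ + d₀ + α) * 0 - β)
      ((μ - β - d₀) * 1 ^ 3 + β * 1 ^ 2 + (β - μ + d₀ + α) * 1 - β) := by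
    constructor <;> nlinarith
  obtain ⟨x, hx, hfx⟩ := hIVT h0mem
  exact ⟨x, ⟨hx, hfx⟩, fun y hy => uniq y x hy.1 hx hy.2 hfx⟩
end

section
/- If β + d₀ = μ, then the unique fixed point of T in [0,1] is x* = (√(α² + 4β²) − α)/(2β), and moreover x* ∈ (0,1). -/
theorem stmt_16 (α β μ d₀ : ℝ)
    (hα : 0 < α) (hβ : 0 < β) (hμ0 : 0 < μ) (hμ1 : μ ≤ 1)
    (hd : 0 < d₀) (had : α + d₀ ≤ 1)
    (heq : β + d₀ = μ) :
    let T : ℝ → ℝ := fun x =>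
      ((1 - d₀ - β) * x ^ 2 + (1 - d₀ - α) * x + β) /
      ((μ - β - d₀) * x ^ 2 + (1 - d₀) * x + β - μ + 1)
    let xs : ℝ := (Real.sqrt (α ^ 2 + 4 * β ^ 2) - α) / (2 * β)
    T xs = xs ∧ 0 < xs ∧ xs < 1 ∧
      ∀ x ∈ Set.Icc (0:ℝ) 1, T x = x → x = xs := by
  intro T xs
  have hd1 : d₀ < 1 := by linarith
  set s := Real.sqrt (α ^ 2 + 4 * β ^ 2) with hs
  have hsnn : (0:ℝ) ≤ α ^ 2 + 4 * β ^ 2 := by positivity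
  have hs2 : s ^ 2 = α ^ 2 + 4 * β ^ 2 := Real.sq_sqrt hsnn
  have hsgt : α < s := by
    have h1 : α = Real.sqrt (α ^ 2) := (Real.sqrt_sq hα.le).symm
    rw [h1, hs]
    exact Real.sqrt_lt_sqrt (by positivity) (by nlinarith)
  have hslt : s < α + 2 * β := by
    rw [hs]
    exact (Real.sqrt_lt' (by positivity)).mpr (by nlinarith)
  have hxs : xs = (s - α) / (2 * β) := rfl
  have hxs0 : 0 < xs := by
    rw [hxs]; exact div_pos (by linarith) (by positivity)
  have hxs1 : xs < 1 := by
    rw [hxs, div_lt_one (by positivity)]; linarith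
  have hq : β * xs ^ 2 + α * xs - β = 0 := by
    rw [hxs]
    field_simp
    nlinarith [hs2]
  have hfix : T xs = xs := by
    show ((1 - d₀ - β) * xs ^ 2 + (1 - d₀ - α) * xs + β) /
      ((μ - β - d₀) * xs ^ 2 + (1 - d₀) * xs + β - μ + 1) = xs
    have hD : (μ - β - d₀) * xs ^ 2 + (1 - d₀) * xs + β - μ + 1
        = (1 - d₀) * (xs + 1) := by linear_combination (1 - xs ^ 2) * heq
    have hDpos : (0:ℝ) < (1 - d₀) * (xs + 1) := by nlinarith
    rw [hD, div_eq_iff hDpos.ne']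
    nlinarith [hq]
  refine ⟨hfix, hxs0, hxs1, ?_⟩
  rintro x ⟨hx0, hx1⟩ hTx
  have hD : (μ - β - d₀) * x ^ 2 + (1 - d₀) * x + β - μ + 1
      = (1 - d₀) * (x + 1) := by linear_combination (1 - x ^ 2) * heq
  have hTx' : ((1 - d₀ - β) * x ^ 2 + (1 - d₀ - α) * x + β) /
      ((μ - β - d₀) * x ^ 2 + (1 - d₀) * x + β - μ + 1) = x := hTx
  have hDpos : (0:ℝ) < (1 - d₀) * (x + 1) := by nlinarith
  rw [hD, div_eq_iff hDpos.ne'] at hTx'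
  have hq' : β * x ^ 2 + α * x - β = 0 := by linear_combination -hTx'
  have hfac : (x - xs) * (β * (x + xs) + α) = 0 := by linear_combination hq' - hq
  rcases mul_eq_zero.mp hfac with h | h
  · linarith
  · nlinarith
end

section
/- If β + d₀ = μ and x* = (√(α² + 4β²) − α)/(2β), then |T'(x*)| < 1, where T'(x*) = 1 − (α² + 4β² + (α − 2β)√(α² + 4β²))/(2α(1−d₀)); i.e., the unique fixed point of T is attracting. -/
theorem stmt_17 (α β μ d₀ : ℝ)
    (hα : 0 < α) (hβ : 0 < β) (hμ0 : 0 < μ) (hμ1 : μ ≤ 1)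
    (hd : 0 < d₀) (had : α + d₀ ≤ 1)
    (heq : β + d₀ = μ) :
    let T : ℝ → ℝ := fun x =>
      (1 / (1 - d₀)) * ((1 - μ) * x + β - α + α / (x + 1))
    let xs : ℝ := (Real.sqrt (α ^ 2 + 4 * β ^ 2) - α) / (2 * β)
    deriv T xs =
      1 - (α ^ 2 + 4 * β ^ 2 + (α - 2 * β) * Real.sqrt (α ^ 2 + 4 * β ^ 2)) /
        (2 * α * (1 - d₀)) ∧
    |1 - (α ^ 2 + 4 * β ^ 2 + (α - 2 * β) * Real.sqrt (α ^ 2 + 4 * β ^ 2)) /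
        (2 * α * (1 - d₀))| < 1 := by
  intro T xs
  set s : ℝ := Real.sqrt (α ^ 2 + 4 * β ^ 2) with hs
  have hm : 0 < 1 - d₀ := by linarith
  have hsq : s ^ 2 = α ^ 2 + 4 * β ^ 2 := Real.sq_sqrt (by positivity)
  have hs0 : 0 < s := by
    rw [hs]; exact Real.sqrt_pos.2 (by positivity)
  have hsa : α < s := by nlinarith
  have hβm : β ≤ 1 - d₀ := by linarith
  have hx1 : xs + 1 = (s + 2 * β - α) / (2 * β) := by
    show (s - α) / (2 * β) + 1 = _
    field_simp; ring
  have hden : 0 < s + 2 * β - α := by linarith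
  have hx1pos : 0 < xs + 1 := by rw [hx1]; positivity
  have hx1ne : xs + 1 ≠ 0 := ne_of_gt hx1pos
  have hprod : (α ^ 2 + 4 * β ^ 2 + (α - 2 * β) * s) * (s + 2 * β - α) = 4 * α * β * s := by
    linear_combination (α - 2 * β) * hsq
  -- derivative
  have hD : HasDerivAt T
      ((1 / (1 - d₀)) * ((1 - μ) * 1 + (0 * (xs + 1) - α * 1) / (xs + 1) ^ 2)) xs := by
    have h1 : HasDerivAt (fun x : ℝ => (1 - μ) * x + β - α) ((1 - μ) * 1) xs := by
      simpa [add_sub_assoc] using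
        (((hasDerivAt_id xs).const_mul (1 - μ)).add_const (β - α))
    have h2 : HasDerivAt (fun x : ℝ => α / (x + 1))
        ((0 * (xs + 1) - α * 1) / (xs + 1) ^ 2) xs :=
      (hasDerivAt_const xs α).div ((hasDerivAt_id xs).add_const 1) hx1ne
    exact ((h1.add h2).const_mul (1 / (1 - d₀)))
  have hEq : (1 / (1 - d₀)) * ((1 - μ) * 1 + (0 * (xs + 1) - α * 1) / (xs + 1) ^ 2)
      = 1 - (α ^ 2 + 4 * β ^ 2 + (α - 2 * β) * s) / (2 * α * (1 - d₀)) := by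
    rw [hx1]
    field_simp
    linear_combination ((α - 2 * β) * (s + 2 * β - α) + 2 * α * β) * hsq
      + (2 * α * (s + 2 * β - α) ^ 2) * heq
  -- key inequality: β * s < (1 - d₀) * (s + 2 * β - α)
  have hK : β * s < (1 - d₀) * (s + 2 * β - α) := by
    nlinarith [mul_pos hs0 hden, mul_pos hβ hs0, sq_nonneg (s - α),
      mul_pos (sub_pos.2 hsa) hs0, mul_nonneg (sub_nonneg.2 hβm) hs0.le,
      mul_nonneg (sub_nonneg.2 hβm) hβ.le]
  have hE2 : (α ^ 2 + 4 * β ^ 2 + (α - 2 * β) * s) / (2 * α * (1 - d₀)) < 2 := by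
    rw [div_lt_iff₀ (by positivity)]
    have h4 : (α ^ 2 + 4 * β ^ 2 + (α - 2 * β) * s) * (s + 2 * β - α)
        < (2 * (2 * α * (1 - d₀))) * (s + 2 * β - α) := by
      rw [hprod]
      nlinarith [mul_lt_mul_of_pos_left hK (by positivity : (0:ℝ) < 4 * α)]
    exact lt_of_mul_lt_mul_right h4 hden.le
  have hE0 : 0 < (α ^ 2 + 4 * β ^ 2 + (α - 2 * β) * s) / (2 * α * (1 - d₀)) := by
    apply div_pos _ (by positivity)
    nlinarith [mul_pos hs0 hden]
  refine ⟨hD.deriv.trans hEq, ?_⟩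
  rw [abs_lt]
  constructor <;> linarith
end

section
/- The quadratic Ax² + Bx + C with A = (1−β)(β−2) + (β−μ+1)(β−μ) + d₀(5 − 2β − μ − 2d₀), B = 2(1−d₀)(α + d₀ + μ − 2) − αβ, C = (β−μ+1)(α + d₀ + μ − 2) − β(2 − μ − d₀) satisfies Ax² + Bx + C < 0 for all x ∈ [0,1]; in particular B < 0, C < 0, and A + B + C < 0. -/
theorem stmt_18 (α β μ d₀ : ℝ)
    (hα : 0 < α) (hβ : 0 < β) (hμ0 : 0 < μ) (hμ1 : μ ≤ 1)
    (hd : 0 < d₀) (had : α + d₀ ≤ 1) :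
    let A := (1 - β) * (β - 2) + (β - μ + 1) * (β - μ) + d₀ * (5 - 2 * β - μ - 2 * d₀)
    let B := 2 * (1 - d₀) * (α + d₀ + μ - 2) - α * β
    let C := (β - μ + 1) * (α + d₀ + μ - 2) - β * (2 - μ - d₀)
    (∀ x ∈ Set.Icc (0:ℝ) 1, A * x ^ 2 + B * x + C < 0) ∧
    B < 0 ∧ C < 0 ∧ A + B + C < 0 := by
  intro A B C
  have hd1 : d₀ < 1 := by linarith
  have hB : B < 0 := by
    have : α * β > 0 := mul_pos hα hβ
    have h2 : α + d₀ + μ - 2 ≤ 0 := by linarith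
    have : 2 * (1 - d₀) * (α + d₀ + μ - 2) ≤ 0 := by nlinarith
    simp only [B]; linarith
  have hC : C < 0 := by
    have h2 : α + d₀ + μ - 2 ≤ 0 := by linarith
    have h3 : (0:ℝ) < β - μ + 1 := by linarith
    have h4 : (β - μ + 1) * (α + d₀ + μ - 2) ≤ 0 := mul_nonpos_of_nonneg_of_nonpos h3.le h2
    have h5 : β * (2 - μ - d₀) > 0 := by nlinarith
    simp only [C]; linarith
  have hS : A + B + C < 0 := by
    simp only [A, B, C]
    nlinarith [sq_nonneg (1 - d₀), mul_nonneg (sub_nonneg.2 had) (by linarith : (0:ℝ) ≤ 1 - μ),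
      mul_pos hd (by linarith : (0:ℝ) < 1 - d₀),
      mul_nonneg (sub_nonneg.2 had) hd.le, mul_nonneg hα.le (by linarith : (0:ℝ) ≤ 1 - μ)]
  refine ⟨?_, hB, hC, hS⟩
  intro x hx
  obtain ⟨hx0, hx1⟩ := hx
  rcases le_or_gt A 0 with hA | hA
  · have hx2 : 0 ≤ x ^ 2 := sq_nonneg x
    nlinarith [mul_nonpos_of_nonpos_of_nonneg hA hx2, mul_nonneg (neg_nonneg.2 hB.le) hx0]
  · have hxx : x ^ 2 ≤ x := by nlinarith
    have h1 : A * x ^ 2 ≤ A * x := by nlinarith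
    have h2 : (A + B) * x + C < 0 := by
      rcases le_or_gt (A + B) 0 with h | h
      · nlinarith
      · nlinarith
    nlinarith
end

section
/- The map T has no periodic points of prime period p ≥ 2 in [0,1]: for every p ≥ 2 and x ∈ [0,1], T^p(x) = x implies T(x) = x. -/
theorem stmt_19 (α β μ d₀ : ℝ)
    (hα : 0 < α) (hβ : 0 < β) (hμ0 : 0 < μ) (hμ1 : μ ≤ 1)
    (hd : 0 < d₀) (had : α + d₀ ≤ 1)
    (T : ℝ → ℝ)
    (hT : ∀ x, T x =
      ((1 - d₀ - β) * x ^ 2 + (1 - d₀ - α) * x + β) /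
      ((μ - β - d₀) * x ^ 2 + (1 - d₀) * x + β - μ + 1)) :
    ∀ p : ℕ, 2 ≤ p → ∀ x ∈ Set.Icc (0:ℝ) 1, T^[p] x = x → T x = x := by
  classical
  -- denominator is positive on [0,1]
  have hD : ∀ x ∈ Set.Icc (0:ℝ) 1,
      0 < (μ - β - d₀) * x ^ 2 + (1 - d₀) * x + β - μ + 1 := by
    rintro x ⟨hx0, hx1⟩
    rcases eq_or_lt_of_le hx0 with h0 | h0
    · rw [← h0]; nlinarith
    · nlinarith [mul_pos (show (0:ℝ) < 1 - d₀ by linarith) h0,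
        mul_nonneg (mul_nonneg (show (0:ℝ) ≤ β + 1 - μ by linarith)
          (sub_nonneg.2 hx1)) (show (0:ℝ) ≤ 1 + x by linarith),
        mul_nonneg (show (0:ℝ) ≤ 1 - d₀ by linarith) (sq_nonneg x)]
  -- T maps [0,1] into itself
  have hself : ∀ x ∈ Set.Icc (0:ℝ) 1, T x ∈ Set.Icc (0:ℝ) 1 := by
    rintro x hx
    obtain ⟨hx0, hx1⟩ := hx
    have hDx := hD x ⟨hx0, hx1⟩
    rw [hT x]
    constructor
    · apply div_nonneg _ hDx.le
      nlinarith [mul_nonneg hx0 hx0, mul_nonneg (sub_nonneg.2 hx1) hx0,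
        mul_nonneg (sub_nonneg.2 hx1) (sub_nonneg.2 hx1)]
    · rw [div_le_one hDx]
      nlinarith [mul_nonneg (sub_nonneg.2 hx1) hx0, mul_nonneg hx0 hx0]
  -- no flip pairs: a < b with T a ≥ b and T b ≤ a is impossible
  have hflip : ∀ a ∈ Set.Icc (0:ℝ) 1, ∀ b ∈ Set.Icc (0:ℝ) 1,
      a < b → b ≤ T a → T b ≤ a → False := by
    rintro a ⟨ha0, ha1⟩ b ⟨hb0, hb1⟩ hab hTa hTb
    have hDa := hD a ⟨ha0, ha1⟩
    have hDb := hD b ⟨hb0, hb1⟩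
    rw [hT a] at hTa
    rw [hT b] at hTb
    have h1 : b * ((μ - β - d₀) * a ^ 2 + (1 - d₀) * a + β - μ + 1)
        ≤ (1 - d₀ - β) * a ^ 2 + (1 - d₀ - α) * a + β := (le_div_iff₀ hDa).mp hTa
    have h2 : (1 - d₀ - β) * b ^ 2 + (1 - d₀ - α) * b + β
        ≤ a * ((μ - β - d₀) * b ^ 2 + (1 - d₀) * b + β - μ + 1) := (div_le_iff₀ hDb).mp hTb
    have hG : 0 < (1 - d₀ - β) * (a + b) + (1 - d₀ - α) + (β - μ + 1)
        - (μ - β - d₀) * (a * b) := by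
      nlinarith [mul_nonneg (sub_nonneg.2 ha1) (sub_nonneg.2 hb1),
        mul_nonneg ha0 (sub_nonneg.2 hb1), mul_nonneg hb0 (sub_nonneg.2 ha1),
        mul_nonneg ha0 hb0]
    nlinarith [mul_pos (sub_pos.2 hab) hG]
  -- iterates stay in [0,1]
  intro p hp x hx hper
  have hit : ∀ n : ℕ, T^[n] x ∈ Set.Icc (0:ℝ) 1 := by
    intro n
    induction n with
    | zero => simpa using hx
    | succ n ih => rw [Function.iterate_succ_apply']; exact hself _ ih
  -- if x < T x then x < T^[n+1] x for all n
  have keyup : x < T x → ∀ n : ℕ, x < T^[n+1] x := by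
    intro hTx n
    induction n using Nat.strong_induction_on with
    | _ n ih =>
      by_contra hcon
      push_neg at hcon
      match n, ih, hcon with
      | 0, _, hcon => simp at hcon; linarith
      | Nat.succ m, ih, hcon =>
        have hxy : x < T^[m+1] x := ih m (Nat.lt_succ_self m)
        have hTyx : T (T^[m+1] x) ≤ x := by
          rw [← Function.iterate_succ_apply' T (m+1) x]
          exact hcon
        have hex : ∃ i, T^[m+1] x ≤ T^[i+1] x := ⟨m, le_refl _⟩
        obtain ⟨i, hi, hile, hmin⟩ :
            ∃ i, (T^[m+1] x ≤ T^[i+1] x) ∧ i ≤ m ∧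
              ∀ j < i, ¬(T^[m+1] x ≤ T^[j+1] x) :=
          ⟨Nat.find hex, Nat.find_spec hex, Nat.find_min' hex (le_refl _),
            fun j hj => Nat.find_min hex hj⟩
        have hxu : x ≤ T^[i] x := by
          match i, hi, hile, hmin with
          | 0, _, _, _ => simp
          | Nat.succ j, _, hile, _ => exact le_of_lt (ih j (by omega))
        have huy : T^[i] x < T^[m+1] x := by
          match i, hi, hile, hmin with
          | 0, _, _, _ => simpa using hxy
          | Nat.succ j, hi, hile, hmin =>
            have := hmin j (Nat.lt_succ_self j)
            push_neg at this
            exact this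
        have hTu : T^[m+1] x ≤ T (T^[i] x) := by
          rw [← Function.iterate_succ_apply' T i x]
          exact hi
        exact hflip (T^[i] x) (hit i) (T^[m+1] x) (hit (m+1)) huy hTu
          (le_trans hTyx hxu)
  -- if T x < x then T^[n+1] x < x for all n
  have keydn : T x < x → ∀ n : ℕ, T^[n+1] x < x := by
    intro hTx n
    induction n using Nat.strong_induction_on with
    | _ n ih =>
      by_contra hcon
      push_neg at hcon
      match n, ih, hcon with
      | 0, _, hcon => simp at hcon; linarith
      | Nat.succ m, ih, hcon =>
        have hxy : T^[m+1] x < x := ih m (Nat.lt_succ_self m)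
        have hTyx : x ≤ T (T^[m+1] x) := by
          rw [← Function.iterate_succ_apply' T (m+1) x]
          exact hcon
        have hex : ∃ i, T^[i+1] x ≤ T^[m+1] x := ⟨m, le_refl _⟩
        obtain ⟨i, hi, hile, hmin⟩ :
            ∃ i, (T^[i+1] x ≤ T^[m+1] x) ∧ i ≤ m ∧
              ∀ j < i, ¬(T^[j+1] x ≤ T^[m+1] x) :=
          ⟨Nat.find hex, Nat.find_spec hex, Nat.find_min' hex (le_refl _),
            fun j hj => Nat.find_min hex hj⟩
        have hxu : T^[i] x ≤ x := by
          match i, hi, hile, hmin with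
          | 0, _, _, _ => simp
          | Nat.succ j, _, hile, _ => exact le_of_lt (ih j (by omega))
        have huy : T^[m+1] x < T^[i] x := by
          match i, hi, hile, hmin with
          | 0, _, _, _ => simpa using hxy
          | Nat.succ j, hi, hile, hmin =>
            have := hmin j (Nat.lt_succ_self j)
            push_neg at this
            exact this
        have hTu : T (T^[i] x) ≤ T^[m+1] x := by
          rw [← Function.iterate_succ_apply' T i x]
          exact hi
        exact hflip (T^[m+1] x) (hit (m+1)) (T^[i] x) (hit i) huy
          (le_trans hxu hTyx) hTu
  -- conclude
  rcases lt_trichotomy (T x) x with h | h | h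
  · exfalso
    have h2 := keydn h (p - 1)
    have hps : p - 1 + 1 = p := by omega
    rw [hps, hper] at h2
    exact lt_irrefl x h2
  · exact h
  · exfalso
    have h2 := keyup h (p - 1)
    have hps : p - 1 + 1 = p := by omega
    rw [hps, hper] at h2
    exact lt_irrefl x h2
end
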